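/- arXiv:2001.02189 — 7 statements merged into one kernel-verified Lean document; each statement's English description precedes it below -/
import Mathlib

section
/- Let G be a finite simple graph on n(G) vertices. If G is connected, then the general position number of the complementary prism G\bar{G} satisfies gp(G\bar{G}) ≤ n(G) + 1. -/
open SimpleGraph

variable {V : Type*}

/-- `v` lies on a geodesic (shortest path) between `u` and `w` in `G`. -/
def liesOnGeodesic (G : SimpleGraph V) (u v w : V) : Prop :=
  G.Reachable u w ∧ G.dist u v + G.dist v w = G.dist u w

/-- `S` is a general position set in `G`: no element of `S` lies on a geodesic
between two other elements of `S`. -/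
def isGenPosSet (G : SimpleGraph V) (S : Set V) : Prop :=
  ∀ u ∈ S, ∀ v ∈ S, ∀ w ∈ S, u ≠ v → v ≠ w → u ≠ w → ¬ liesOnGeodesic G u v w

/-- The general position number `gp(G)` of `G`. -/
noncomputable def gpNum (G : SimpleGraph V) : ℕ :=
  sSup {n : ℕ | ∃ S : Set V, isGenPosSet G S ∧ S.ncard = n}

/-- `S` is a `3`-general position set in `G`: no three vertices of `S` lie on a
common geodesic of length at most `3`. -/
def isGP3Set (G : SimpleGraph V) (S : Set V) : Prop :=
  ∀ u ∈ S, ∀ v ∈ S, ∀ w ∈ S, u ≠ v → v ≠ w → u ≠ w →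
    ¬ (liesOnGeodesic G u v w ∧ G.dist u w ≤ 3)

/-- The `3`-general position number `gp₃(G)` of `G`. -/
noncomputable def gp3Num (G : SimpleGraph V) : ℕ :=
  sSup {n : ℕ | ∃ S : Set V, isGP3Set G S ∧ S.ncard = n}

/-- The complementary prism `G\bar{G}`: the disjoint union of `G` (left copy) and
its complement `Gᶜ` (right copy), together with the perfect matching joining each
vertex to its copy. -/
def compPrism (G : SimpleGraph V) : SimpleGraph (V ⊕ V) where
  Adj x y :=
    match x, y with
    | Sum.inl a, Sum.inl b => G.Adj a b
    | Sum.inr a, Sum.inr b => Gᶜ.Adj a b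
    | Sum.inl a, Sum.inr b => a = b
    | Sum.inr a, Sum.inl b => a = b
  symm := by
    constructor
    rintro (a | a) (b | b) h
    · exact (G.adj_comm a b).mp h
    · exact Eq.symm h
    · exact Eq.symm h
    · exact (Gᶜ.adj_comm a b).mp h
  loopless := by
    constructor
    rintro (a | a) h
    · exact G.loopless.irrefl a h
    · exact Gᶜ.loopless.irrefl a h

/-- The eccentricity of a vertex: the maximum distance to another vertex. -/
noncomputable def ecc (G : SimpleGraph V) (v : V) : ℕ :=
  sSup (Set.range (G.dist v))

/-- The radius of a graph: the minimum eccentricity. -/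
noncomputable def rad (G : SimpleGraph V) : ℕ :=
  sInf (Set.range (ecc G))

/-- The diameter of a graph: the maximum distance between two vertices. -/
noncomputable def graphDiam (G : SimpleGraph V) : ℕ :=
  sSup {n : ℕ | ∃ u v : V, G.dist u v = n}

/-- `\bar{gp}₃(G)`: the maximum, over all `gp₃`-sets `S` of `G`, of the `3`-general
position number of the subgraph of `Gᶜ` induced by the vertices outside `S`. -/
noncomputable def barGp3 (G : SimpleGraph V) : ℕ :=
  sSup {n : ℕ | ∃ S : Set V, isGP3Set G S ∧ S.ncard = gp3Num G ∧
          gp3Num ((Gᶜ).induce Sᶜ) = n}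

/-- A cut vertex: its removal disconnects the graph. -/
def isCutVertex (G : SimpleGraph V) (v : V) : Prop :=
  ¬ (G.induce {u : V | u ≠ v}).Connected

/-- `B` is the vertex set of a `2`-connected subgraph of `G`:
it has at least `3` vertices and removing any one vertex leaves it connected. -/
def isTwoConnectedSet (G : SimpleGraph V) (B : Set V) : Prop :=
  3 ≤ B.ncard ∧ ∀ v ∈ B, (G.induce (B \ {v})).Connected

/-- A block graph: every maximal `2`-connected subgraph is a clique. -/
def isBlockGraph (G : SimpleGraph V) : Prop :=
  ∀ B : Set V, isTwoConnectedSet G B →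
    (∀ B' : Set V, isTwoConnectedSet G B' → B ⊆ B' → B = B') →
    G.IsClique B

/-- Complete multipartite graph: the vertices can be partitioned (via an
equivalence relation, whose classes are the parts) so that two vertices are
adjacent iff they lie in different parts. -/
def isCompleteMultipartite (G : SimpleGraph V) : Prop :=
  ∃ r : V → V → Prop, Equivalence r ∧ ∀ u v, G.Adj u v ↔ ¬ r u v

/-- The hypercube `Q_n`: binary strings of length `n`, two strings being
adjacent when they differ in exactly one coordinate. -/
def hypercube (n : ℕ) : SimpleGraph (Fin n → Bool) where
  Adj x y := {i : Fin n | x i ≠ y i}.ncard = 1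
  symm := by
    constructor
    intro x y h
    simpa [ne_comm] using h
  loopless := by
    constructor
    intro x
    simp

/-- The block graph `G_k`: a chain of `k+1` triangles `{vᵢ, uᵢ, vᵢ₊₁}`,
with the `v`-vertices `v₁, …, v_{k+2}` indexed by `Fin (k+2)` (left summand)
and the `u`-vertices `u₁, …, u_{k+1}` indexed by `Fin (k+1)` (right summand);
the edges are `vᵢvᵢ₊₁`, `uᵢvᵢ` and `uᵢvᵢ₊₁`. -/
def Gk (k : ℕ) : SimpleGraph (Fin (k + 2) ⊕ Fin (k + 1)) where
  Adj x y :=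
    match x, y with
    | Sum.inl a, Sum.inl b => a.val + 1 = b.val ∨ b.val + 1 = a.val
    | Sum.inl a, Sum.inr b => a.val = b.val ∨ a.val = b.val + 1
    | Sum.inr a, Sum.inl b => b.val = a.val ∨ b.val = a.val + 1
    | Sum.inr _, Sum.inr _ => False
  symm := by
    constructor
    rintro (a | a) (b | b) h
    · exact Or.symm h
    · exact h
    · exact h
    · exact h
  loopless := by
    constructor
    rintro (a | a) h
    · omega
    · exact h

namespace SimpleGraph

variable {G : SimpleGraph V} {u v w : V}

lemma dist_eq_two_of_adj_of_adj (hne : u ≠ w) (hnadj : ¬ G.Adj u w) (huv : G.Adj u v)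
    (hvw : G.Adj v w) : G.dist u w = 2 := by
  rw [dist, edist_eq_two_iff.mpr ⟨hne, hnadj, v, huv, hvw.symm⟩]
  rfl

lemma liesOnGeodesic_of_adj_of_adj (hne : u ≠ w) (hnadj : ¬ G.Adj u w) (huv : G.Adj u v)
    (hvw : G.Adj v w) : liesOnGeodesic G u v w :=
  ⟨huv.reachable.trans hvw.reachable, by
    rw [dist_eq_one_iff_adj.mpr huv, dist_eq_one_iff_adj.mpr hvw,
      dist_eq_two_of_adj_of_adj hne hnadj huv hvw]⟩

end SimpleGraph

lemma Set.ncard_eq_ncard_preimage_inl_add_ncard_preimage_inr {α β : Type*} [Finite α]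
    [Finite β] (S : Set (α ⊕ β)) :
    S.ncard = (Sum.inl ⁻¹' S).ncard + (Sum.inr ⁻¹' S).ncard := by
  conv_lhs => rw [← Set.image_preimage_inl_union_image_preimage_inr S]
  rw [Set.ncard_union_eq Set.disjoint_image_inl_image_inr,
    Set.ncard_image_of_injective _ Sum.inl_injective,
    Set.ncard_image_of_injective _ Sum.inr_injective]

lemma Set.ncard_le_card_add_one_of_subsingleton_inter {α : Type*} [Fintype α] {S : Set (α ⊕ α)}
    (hS : (Sum.inl ⁻¹' S ∩ Sum.inr ⁻¹' S).Subsingleton) : S.ncard ≤ Fintype.card α + 1 := by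
  rw [Set.ncard_eq_ncard_preimage_inl_add_ncard_preimage_inr,
    ← Set.ncard_union_add_ncard_inter, ← Nat.card_eq_fintype_card]
  exact add_le_add (Set.ncard_le_card _) (Set.ncard_le_one_iff_subsingleton.mpr hS)

/-- If both copies of `u` and of `w ≠ u` were in `S`, then `u, w, w̄` (when `uw ∈ E(G)`) or
`u, ū, w̄` (otherwise) would be an induced path, so its middle vertex is on a geodesic. -/
lemma isGenPosSet.subsingleton_preimage_inl_inter_preimage_inr {G : SimpleGraph V}
    {S : Set (V ⊕ V)} (hS : isGenPosSet (compPrism G) S) :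
    (Sum.inl ⁻¹' S ∩ Sum.inr ⁻¹' S).Subsingleton := by
  rintro u ⟨hu, hu'⟩ w ⟨hw, hw'⟩
  by_contra huw
  have hnadj : ¬ (compPrism G).Adj (Sum.inl u) (Sum.inr w) := huw
  by_cases hadj : G.Adj u w
  · exact hS _ hu _ hw _ hw' (by simpa using huw) (by simp) (by simp) <|
      liesOnGeodesic_of_adj_of_adj (by simp) hnadj (show G.Adj u w from hadj) rfl
  · exact hS _ hu _ hu' _ hw' (by simp) (by simpa using huw) (by simp) <|
      liesOnGeodesic_of_adj_of_adj (by simp) hnadj rfl (show Gᶜ.Adj u w from ⟨huw, hadj⟩)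

theorem gp_compPrism_le_of_connected_general {V : Type*} [Fintype V] (G : SimpleGraph V) :
    gpNum (compPrism G) ≤ Fintype.card V + 1 := by
  apply csSup_le'
  rintro n ⟨S, hS, rfl⟩
  exact Set.ncard_le_card_add_one_of_subsingleton_inter
    hS.subsingleton_preimage_inl_inter_preimage_inr

/-- If `G` is connected, then `gp(G\bar{G}) ≤ n(G) + 1`. -/
theorem gp_compPrism_le_of_connected {V : Type*} [Fintype V] (G : SimpleGraph V)
    (hG : G.Connected) :
    gpNum (compPrism G) ≤ Fintype.card V + 1 :=
  gp_compPrism_le_of_connected_general G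
end

section
/- Let G be a finite simple graph on n(G) vertices. If G is disconnected, then the general position number of the complementary prism G\bar{G} satisfies gp(G\bar{G}) ≤ n(G). -/
open SimpleGraph

variable {V : Type*}

lemma isGenPosSet.dist_add_dist_ne {V : Type*} {G : SimpleGraph V} {S : Set V}
    (hS : isGenPosSet G S) {u v w : V} (hu : u ∈ S) (hv : v ∈ S) (hw : w ∈ S)
    (huv : u ≠ v) (hvw : v ≠ w) (huw : u ≠ w) (h : G.dist u w ≠ 0) :
    G.dist u v + G.dist v w ≠ G.dist u w :=
  fun heq ↦ hS u hu v hv w hw huv hvw huw ⟨Reachable.of_dist_ne_zero h, heq⟩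

section compPrism

variable {V : Type*} {G : SimpleGraph V} {a b : V}

@[simp]
lemma compPrism_adj_inl_inl : (compPrism G).Adj (.inl a) (.inl b) ↔ G.Adj a b := Iff.rfl

@[simp]
lemma compPrism_adj_inr_inr : (compPrism G).Adj (.inr a) (.inr b) ↔ Gᶜ.Adj a b := Iff.rfl

@[simp]
lemma compPrism_adj_inl_inr : (compPrism G).Adj (.inl a) (.inr b) ↔ a = b := Iff.rfl

@[simp]
lemma compPrism_adj_inr_inl : (compPrism G).Adj (.inr a) (.inl b) ↔ a = b := Iff.rfl

lemma compPrism_dist_inl_inl_of_adj (h : G.Adj a b) :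
    (compPrism G).dist (.inl a) (.inl b) = 1 :=
  dist_eq_one_iff_adj.mpr h

lemma compPrism_dist_inr_inr_of_not_adj (hab : a ≠ b) (h : ¬ G.Adj a b) :
    (compPrism G).dist (.inr a) (.inr b) = 1 :=
  dist_eq_one_iff_adj.mpr ⟨hab, h⟩

lemma compPrism_dist_inl_inr_self (a : V) : (compPrism G).dist (.inl a) (.inr a) = 1 :=
  dist_eq_one_iff_adj.mpr rfl

lemma compPrism_dist_inl_inr (hab : a ≠ b) : (compPrism G).dist (.inl a) (.inr b) = 2 := by
  have hcommon : ((compPrism G).commonNeighbors (.inl a) (.inr b)).Nonempty := by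
    by_cases h : G.Adj a b
    · exact ⟨.inl b, by simpa [mem_commonNeighbors] using h⟩
    · exact ⟨.inr a, by simp [mem_commonNeighbors, hab.symm, G.adj_comm, h]⟩
  have h2 : (compPrism G).edist (.inl a) (.inr b) = 2 :=
    edist_eq_two_iff.mpr ⟨by simp, by simpa using hab, hcommon⟩
  simp [SimpleGraph.dist, h2]

/-- Vertices in different components of `G` have no common neighbour in the prism, while
`a ā b̄ b` always has length `3`. -/
lemma compPrism_dist_inl_inl_of_not_reachable (h : ¬ G.Reachable a b) :
    (compPrism G).dist (.inl a) (.inl b) = 3 := by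
  have hab : a ≠ b := by rintro rfl; exact h .rfl
  have hnadj : ¬ G.Adj a b := fun hadj ↦ h hadj.reachable
  have hlower : 2 < (compPrism G).edist (.inl a) (.inl b) := by
    refine two_lt_edist_iff.mpr ⟨by simpa using hab, by simpa using hnadj, ?_⟩
    refine Set.eq_empty_of_forall_notMem fun x hx ↦ ?_
    rw [mem_commonNeighbors] at hx
    rcases x with c | c
    · exact h ((compPrism_adj_inl_inl.mp hx.1).reachable.trans
        (compPrism_adj_inl_inl.mp hx.2).symm.reachable)
    · exact hab ((compPrism_adj_inl_inr.mp hx.1).trans (compPrism_adj_inl_inr.mp hx.2).symm)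
  have hupper : (compPrism G).edist (.inl a) (.inl b) ≤ 3 := by
    let p : (compPrism G).Walk (.inl a) (.inl b) :=
      .cons (compPrism_adj_inl_inr.mpr rfl) <| .cons (compPrism_adj_inr_inr.mpr ⟨hab, hnadj⟩) <|
        .cons (compPrism_adj_inr_inl.mpr rfl) .nil
    exact edist_le p
  have h3 : (compPrism G).edist (.inl a) (.inl b) = 3 :=
    le_antisymm hupper (Order.add_one_le_of_lt hlower)
  simp [SimpleGraph.dist, h3]

variable {S : Set (V ⊕ V)} {v : V}

lemma isGenPosSet.adj_of_inr_mem (hS : isGenPosSet (compPrism G) S) (hvl : .inl v ∈ S)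
    (hvr : .inr v ∈ S) (hb : .inr b ∈ S) (hbv : b ≠ v) : G.Adj b v := by
  by_contra hnadj
  have hbv2 : (compPrism G).dist (.inr b) (.inl v) = 2 := by
    rw [dist_comm, compPrism_dist_inl_inr hbv.symm]
  refine hS.dist_add_dist_ne hb hvr hvl (by simpa using hbv) (by simp) (by simp) ?_ ?_
  all_goals rw [hbv2]
  · simp
  · rw [compPrism_dist_inr_inr_of_not_adj hbv hnadj, dist_comm, compPrism_dist_inl_inr_self]

lemma isGenPosSet.not_adj_of_inl_mem (hS : isGenPosSet (compPrism G) S) (hvl : .inl v ∈ S)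
    (hvr : .inr v ∈ S) (ha : .inl a ∈ S) (hav : a ≠ v) : ¬ G.Adj a v := by
  intro hadj
  refine hS.dist_add_dist_ne ha hvl hvr (by simpa using hav) (by simp) (by simp) ?_ ?_
  all_goals rw [compPrism_dist_inl_inr hav]
  · simp
  · rw [compPrism_dist_inl_inl_of_adj hadj, compPrism_dist_inl_inr_self]

lemma isGenPosSet.reachable_of_inl_mem (hS : isGenPosSet (compPrism G) S) (hvl : .inl v ∈ S)
    (hvr : .inr v ∈ S) (ha : .inl a ∈ S) : G.Reachable v a := by
  by_contra hreach
  have hav : a ≠ v := by rintro rfl; exact hreach .rfl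
  refine hS.dist_add_dist_ne ha hvr hvl (by simp) (by simp) (by simpa using hav) ?_ ?_
  all_goals rw [compPrism_dist_inl_inl_of_not_reachable (mt Reachable.symm hreach)]
  · simp
  · rw [compPrism_dist_inl_inr hav, dist_comm, compPrism_dist_inl_inr_self]

lemma isGenPosSet.preimage_inl_inter_preimage_inr_subset (hS : isGenPosSet (compPrism G) S)
    (hvl : .inl v ∈ S) (hvr : .inr v ∈ S) : Sum.inl ⁻¹' S ∩ Sum.inr ⁻¹' S ⊆ {v} := by
  rintro u ⟨hul, hur⟩
  by_contra huv
  exact hS.not_adj_of_inl_mem hvl hvr hul huv (hS.adj_of_inr_mem hvl hvr hur huv)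

lemma isGenPosSet.preimage_inl_union_preimage_inr_subset (hS : isGenPosSet (compPrism G) S)
    (hvl : .inl v ∈ S) (hvr : .inr v ∈ S) :
    Sum.inl ⁻¹' S ∪ Sum.inr ⁻¹' S ⊆ {u | G.Reachable v u} := by
  rintro u (hul | hur)
  · exact hS.reachable_of_inl_mem hvl hvr hul
  · obtain rfl | huv := eq_or_ne u v
    · exact Reachable.rfl
    · exact (hS.adj_of_inr_mem hvl hvr hur huv).reachable.symm

end compPrism

/-- If `G` is disconnected, then `gp(G\bar{G}) ≤ n(G)`. -/
theorem gp_compPrism_le_of_disconnected {V : Type*} [Fintype V] (G : SimpleGraph V)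
    (hG : ¬ G.Connected) :
    gpNum (compPrism G) ≤ Fintype.card V := by
  refine csSup_le ⟨0, ∅, by simp [isGenPosSet], Set.ncard_empty _⟩ ?_
  rintro _ ⟨S, hS, rfl⟩
  rw [← Nat.card_eq_fintype_card, Set.ncard_eq_ncard_preimage_inl_add_ncard_preimage_inr,
    ← Set.ncard_union_add_ncard_inter]
  by_cases hv : ∃ v, Sum.inl v ∈ S ∧ Sum.inr v ∈ S
  · obtain ⟨v, hvl, hvr⟩ := hv
    obtain ⟨w, hw⟩ : ∃ w, ¬ G.Reachable v w := by
      simp only [connected_iff_exists_forall_reachable, not_exists, not_forall] at hG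
      exact hG v
    have hunion : (Sum.inl ⁻¹' S ∪ Sum.inr ⁻¹' S).ncard < Nat.card V :=
      Set.ncard_lt_card fun h ↦ hw <|
        hS.preimage_inl_union_preimage_inr_subset hvl hvr (h ▸ Set.mem_univ w)
    have hinter : (Sum.inl ⁻¹' S ∩ Sum.inr ⁻¹' S).ncard ≤ 1 :=
      (Set.ncard_le_ncard (hS.preimage_inl_inter_preimage_inr_subset hvl hvr)).trans_eq
        (Set.ncard_singleton v)
    omega
  · have hinter : Sum.inl ⁻¹' S ∩ Sum.inr ⁻¹' S = ∅ :=
      Set.eq_empty_of_forall_notMem fun u hu ↦ hv ⟨u, hu⟩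
    rw [hinter, Set.ncard_empty, add_zero]
    exact Set.ncard_le_card _
end

section
/- Let G be a finite simple graph with n(G) ≥ 2 such that both G and its complement \bar{G} are connected. If gp(G\bar{G}) = n(G) + 1, then the radius of G equals 2. -/
/-!
Let `S` be a general position set of `G\bar{G}` with `n(G) + 1` vertices, and let `A`, `B` be
the sets of vertices of `G` whose copies in `G`, respectively `\bar{G}`, lie in `S`. As
`|A| + |B| = n(G) + 1`, some `x` lies in both. The geodesics `\bar{x} x y` and `x \bar{x} \bar{z}`
show that `x` is adjacent to no other vertex of `A` and to every other vertex of `B`; hence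
`A ∩ B = {x}` and `A ∪ B = V(G)`. A vertex `w` with `d(x, w) ≥ 3` would then lie in `A`, and
`x \bar{x} \bar{w} w` would be a geodesic of `G\bar{G}`, so `ecc(x) ≤ 2`. Conversely, every vertex
has a non-neighbour since `\bar{G}` is connected, so `rad(G) ≥ 2`.
-/

open SimpleGraph

variable {V : Type*}

section CompPrism

variable {G : SimpleGraph V} {x y : V}

@[simp] lemma compPrism_adj_inl_inl_s2 :
    (compPrism G).Adj (Sum.inl x) (Sum.inl y) ↔ G.Adj x y := Iff.rfl

@[simp] lemma compPrism_adj_inl_inr_s2 :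
    (compPrism G).Adj (Sum.inl x) (Sum.inr y) ↔ x = y := Iff.rfl

lemma compPrism_dist_inl_inr_self_s2 (x : V) :
    (compPrism G).dist (Sum.inl x) (Sum.inr x) = 1 :=
  dist_eq_one_iff_adj.mpr rfl

lemma compPrism_dist_inl_inr_of_ne (hxy : x ≠ y) :
    (compPrism G).dist (Sum.inl x) (Sum.inr y) = 2 := by
  have hcommon : ((compPrism G).commonNeighbors (Sum.inl x) (Sum.inr y)).Nonempty := by
    by_cases hadj : G.Adj x y
    · exact ⟨Sum.inl y, hadj, rfl⟩
    · exact ⟨Sum.inr x, rfl, hxy.symm, fun h ↦ hadj h.symm⟩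
  rw [SimpleGraph.dist, edist_eq_two_iff.mpr ⟨Sum.inl_ne_inr, by simpa using hxy, hcommon⟩]
  rfl

lemma compPrism_dist_inr_inl_of_ne (hxy : x ≠ y) :
    (compPrism G).dist (Sum.inr x) (Sum.inl y) = 2 := by
  rw [dist_comm, compPrism_dist_inl_inr_of_ne hxy.symm]

lemma compPrism_dist_inl_inl_of_two_lt (h : 2 < G.dist x y) :
    (compPrism G).dist (Sum.inl x) (Sum.inl y) = 3 := by
  have hr : G.Reachable x y := .of_dist_ne_zero (by omega)
  have hGlt : 2 < G.edist x y := by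
    rw [← hr.coe_dist_eq_edist]
    exact_mod_cast h
  obtain ⟨hne, hnadj, hcommon⟩ := two_lt_edist_iff.mp hGlt
  have hcommon' : (compPrism G).commonNeighbors (Sum.inl x) (Sum.inl y) = ∅ := by
    refine Set.eq_empty_of_forall_notMem ?_
    rintro (m | m) hm <;> simp only [mem_commonNeighbors, compPrism_adj_inl_inl_s2,
      compPrism_adj_inl_inr_s2] at hm
    · exact hcommon.subset (by simpa [mem_commonNeighbors] using hm)
    · exact hne (hm.1.trans hm.2.symm)
  have hlt := two_lt_edist_iff.mpr ⟨by simpa using hne, by simpa using hnadj, hcommon'⟩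
  let p : (compPrism G).Walk (Sum.inl x) (Sum.inl y) :=
    .cons (v := Sum.inr x) rfl <| .cons (v := Sum.inr y) ⟨hne, hnadj⟩ <|
      .cons (v := Sum.inl y) rfl .nil
  rw [SimpleGraph.dist, le_antisymm p.edist_le (Order.add_one_le_of_lt hlt)]
  rfl

end CompPrism

lemma Set.ncard_preimage_inl_add_ncard_preimage_inr {α β : Type*} [Finite α] [Finite β]
    (S : Set (α ⊕ β)) : (Sum.inl ⁻¹' S).ncard + (Sum.inr ⁻¹' S).ncard = S.ncard := by
  classical
  have := Fintype.ofFinite α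
  have := Fintype.ofFinite β
  simp only [Set.ncard_eq_toFinset_card']
  rw [← Finset.card_toLeft_add_card_toRight (u := S.toFinset)]
  congr 2 <;> ext <;> simp

lemma exists_isGenPosSet_ncard_eq_gpNum [Finite V] (G : SimpleGraph V) :
    ∃ S, isGenPosSet G S ∧ S.ncard = gpNum G :=
  Nat.sSup_mem (s := {n | ∃ S, isGenPosSet G S ∧ S.ncard = n})
    ⟨0, ∅, by simp [isGenPosSet], Set.ncard_empty V⟩
    ⟨Nat.card V, by rintro _ ⟨S, -, rfl⟩; exact Set.ncard_le_card S⟩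

lemma liesOnGeodesic_of_dist_add_dist_eq {G : SimpleGraph V} {u v w : V}
    (h : G.dist u v + G.dist v w = G.dist u w) (hpos : G.dist u w ≠ 0) :
    liesOnGeodesic G u v w :=
  ⟨.of_dist_ne_zero hpos, h⟩

namespace isGenPosSet

variable {G : SimpleGraph V} {S : Set (V ⊕ V)} {x y : V}

lemma not_adj_of_inl_mem_s2 (hS : isGenPosSet (compPrism G) S) (hxl : Sum.inl x ∈ S)
    (hxr : Sum.inr x ∈ S) (hy : Sum.inl y ∈ S) (hxy : x ≠ y) : ¬ G.Adj x y :=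
  fun (hadj : (compPrism G).Adj (Sum.inl x) (Sum.inl y)) ↦
  hS _ hxr _ hxl _ hy (by simp) (by simpa using hxy) (by simp) <|
    liesOnGeodesic_of_dist_add_dist_eq
      (by rw [dist_comm, compPrism_dist_inl_inr_self_s2, dist_eq_one_iff_adj.mpr hadj,
        compPrism_dist_inr_inl_of_ne hxy])
      (by rw [compPrism_dist_inr_inl_of_ne hxy]; simp)

lemma adj_of_inr_mem_s2 (hS : isGenPosSet (compPrism G) S) (hxl : Sum.inl x ∈ S)
    (hxr : Sum.inr x ∈ S) (hy : Sum.inr y ∈ S) (hxy : x ≠ y) : G.Adj x y := by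
  by_contra hnadj
  have hadj : (compPrism G).Adj (Sum.inr x) (Sum.inr y) := ⟨hxy, hnadj⟩
  exact hS _ hxl _ hxr _ hy (by simp) (by simpa using hxy) (by simp) <|
    liesOnGeodesic_of_dist_add_dist_eq
      (by rw [compPrism_dist_inl_inr_self_s2, dist_eq_one_iff_adj.mpr hadj,
        compPrism_dist_inl_inr_of_ne hxy])
      (by rw [compPrism_dist_inl_inr_of_ne hxy]; simp)

lemma dist_le_two_of_inl_mem (hS : isGenPosSet (compPrism G) S) (hxl : Sum.inl x ∈ S)
    (hxr : Sum.inr x ∈ S) (hy : Sum.inl y ∈ S) : G.dist x y ≤ 2 := by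
  by_contra! h
  have hxy : x ≠ y := by rintro rfl; simp at h
  exact hS _ hxl _ hxr _ hy (by simp) (by simp) (by simpa using hxy) <|
    liesOnGeodesic_of_dist_add_dist_eq
      (by rw [compPrism_dist_inl_inr_self_s2, compPrism_dist_inr_inl_of_ne hxy,
        compPrism_dist_inl_inl_of_two_lt h])
      (by rw [compPrism_dist_inl_inl_of_two_lt h]; simp)

lemma exists_forall_dist_le_two [Fintype V] (hS : isGenPosSet (compPrism G) S)
    (hcard : S.ncard = Fintype.card V + 1) : ∃ x, ∀ y, G.dist x y ≤ 2 := by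
  set A := Sum.inl ⁻¹' S
  set B := Sum.inr ⁻¹' S
  have hAB : A.ncard + B.ncard = Nat.card V + 1 := by
    rw [Set.ncard_preimage_inl_add_ncard_preimage_inr, hcard, Nat.card_eq_fintype_card]
  have hinter : (A ∩ B).ncard ≤ 1 := (Set.ncard_le_one_iff).mpr fun {y z} hy hz ↦ by
    by_contra hyz
    exact hS.not_adj_of_inl_mem_s2 hy.1 hy.2 hz.1 hyz (hS.adj_of_inr_mem_s2 hy.1 hy.2 hz.2 hyz)
  have hunion_le := Set.ncard_le_card (A ∪ B)
  have hsum := Set.ncard_inter_add_ncard_union A B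
  obtain ⟨x, hxl, hxr⟩ : (A ∩ B).Nonempty := Set.nonempty_of_ncard_ne_zero (by omega)
  have hunion : A ∪ B = Set.univ := (Set.eq_univ_iff_ncard _).mpr (by omega)
  refine ⟨x, fun y ↦ ?_⟩
  obtain rfl | hxy := eq_or_ne x y
  · simp
  rcases hunion.symm ▸ Set.mem_univ y with hy | hy
  · exact hS.dist_le_two_of_inl_mem hxl hxr hy
  · exact (dist_eq_one_iff_adj.mpr (hS.adj_of_inr_mem_s2 hxl hxr hy hxy)).trans_le one_le_two

end isGenPosSet

section Radius

variable {G : SimpleGraph V}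

lemma dist_le_ecc [Finite V] (v w : V) : G.dist v w ≤ ecc G v :=
  le_csSup (Set.finite_range _).bddAbove ⟨w, rfl⟩

lemma ecc_le_of_forall_dist_le {v : V} {k : ℕ} (h : ∀ w, G.dist v w ≤ k) : ecc G v ≤ k :=
  csSup_le' (Set.forall_mem_range.mpr h)

lemma rad_le_ecc (v : V) : rad G ≤ ecc G v :=
  Nat.sInf_le (Set.mem_range_self v)

lemma two_le_rad [Finite V] [Nontrivial V] (hG : G.Connected) (hGc : Gᶜ.Connected) :
    2 ≤ rad G :=
  le_csInf (Set.range_nonempty (ecc G)) <| by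
    rintro _ ⟨v, rfl⟩
    obtain ⟨u, hvu, hnadj⟩ := hGc.preconnected.exists_adj_of_nontrivial v
    exact (hG.one_lt_dist_of_ne_of_not_adj hvu hnadj).trans_le (dist_le_ecc v u)

end Radius

/-- If `n(G) ≥ 2`, both `G` and `Gᶜ` are connected and `gp(G\bar{G}) = n(G) + 1`,
then `rad(G) = 2`. -/
theorem radius_eq_two_of_gp_compPrism_eq {V : Type*} [Fintype V] (G : SimpleGraph V)
    (hn : 2 ≤ Fintype.card V) (hG : G.Connected) (hGc : Gᶜ.Connected)
    (hgp : gpNum (compPrism G) = Fintype.card V + 1) :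
    rad G = 2 := by
  have : Nontrivial V := Fintype.one_lt_card_iff_nontrivial.mp hn
  obtain ⟨S, hS, hcard⟩ := exists_isGenPosSet_ncard_eq_gpNum (compPrism G)
  obtain ⟨x, hx⟩ := hS.exists_forall_dist_le_two (hcard.trans hgp)
  exact le_antisymm ((rad_le_ecc x).trans (ecc_le_of_forall_dist_le hx)) (two_le_rad hG hGc)
end

section
/- Let G be a finite connected simple graph. A set S of vertices of G is a 3-general position set if and only if every connected component of the subgraph induced by S is a clique, and whenever u and v are vertices of S lying in different components Q and Q' of the induced subgraph G[S] with d_G(u,v) = 2, then d_G(x,y) = 2 for all x in Q and all y in Q'. -/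
/-!
Since distinct vertices are at distance at least one, a geodesic of length at most `3` through
three vertices of `S` has segments of lengths `1 + 1` or `1 + 2`. Forbidding the first kind says
that adjacency is transitive on `S`, i.e. the components of `G[S]` are cliques. Forbidding the
second says that no neighbour in `S` of `v` is at distance `3` from a `w ∈ S` with `d(v, w) = 2`.
Such `v` and `w` lie in different cliques, so the triangle inequality pins that distance to `2`,
and moving one endpoint at a time within its clique spreads `d = 2` over the whole pair of
components.
-/

open SimpleGraph

variable {V : Type*}

theorem SimpleGraph.forall_reachable_eq_or_adj_iff {H : SimpleGraph V} :
    (∀ u v, H.Reachable u v → u = v ∨ H.Adj u v) ↔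
      ∀ u v w, H.Adj u v → H.Adj v w → u ≠ w → H.Adj u w := by
  refine ⟨fun h u v w huv hvw huw ↦
    (h u w (huv.reachable.trans hvw.reachable)).resolve_left huw, fun h u v huv ↦ ?_⟩
  obtain ⟨p⟩ := huv
  induction p with
  | nil => exact .inl rfl
  | @cons a b c hab _ ih =>
    rcases ih with rfl | hbc
    · exact .inr hab
    · by_cases hac : a = c
      · exact .inl hac
      · exact .inr (h a b c hab hbc hac)

variable {G : SimpleGraph V} {S : Set V}

theorem isGP3Set_iff_of_connected (hG : G.Connected) :
    isGP3Set G S ↔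
      (∀ u v w : S, (G.induce S).Adj u v → (G.induce S).Adj v w → u ≠ w →
        (G.induce S).Adj u w) ∧
      (∀ u v w : S, (G.induce S).Adj u v → G.dist (v : V) w = 2 → G.dist (u : V) w ≠ 3) := by
  constructor
  · intro h
    refine ⟨fun u v w (huv : G.Adj u v) (hvw : G.Adj v w) huw ↦ ?_,
      fun u v w (huv : G.Adj u v) hvw huw ↦ ?_⟩
    · by_contra huw'
      have huw'' : (u : V) ≠ w := Subtype.coe_injective.ne huw
      have hd : G.dist (u : V) w = 2 :=
        le_antisymm (dist_le (.cons huv (.cons hvw .nil)))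
          (hG.one_lt_dist_of_ne_of_not_adj huw'' huw')
      refine h u u.2 v v.2 w w.2 huv.ne hvw.ne huw'' ⟨⟨hG u w, ?_⟩, by omega⟩
      rw [dist_eq_one_iff_adj.mpr huv, dist_eq_one_iff_adj.mpr hvw, hd]
    · have hvw' : (v : V) ≠ w := by rintro h; simp [h] at hvw
      have huw' : (u : V) ≠ w := by
        rintro h
        rw [← h, SimpleGraph.dist_comm, dist_eq_one_iff_adj.mpr huv] at hvw
        omega
      refine h u u.2 v v.2 w w.2 huv.ne hvw' huw' ⟨⟨hG u w, ?_⟩, by omega⟩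
      rw [dist_eq_one_iff_adj.mpr huv, hvw, huw]
  · rintro ⟨htrans, hfar⟩ u hu v hv w hw huv hvw huw ⟨⟨-, hgeo⟩, hle⟩
    have huv' := hG.pos_dist_of_ne huv
    have hvw' := hG.pos_dist_of_ne hvw
    obtain huv1 | huv2 : G.dist u v = 1 ∨ G.dist u v = 2 := by omega
    · rw [dist_eq_one_iff_adj] at huv1
      obtain hvw1 | hvw2 : G.dist v w = 1 ∨ G.dist v w = 2 := by omega
      · rw [dist_eq_one_iff_adj] at hvw1
        have huw1 : G.Adj u w :=
          htrans ⟨u, hu⟩ ⟨v, hv⟩ ⟨w, hw⟩ huv1 hvw1 (by simpa using huw)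
        rw [dist_eq_one_iff_adj.mpr huw1] at hgeo
        omega
      · exact hfar ⟨u, hu⟩ ⟨v, hv⟩ ⟨w, hw⟩ huv1 hvw2 (show G.dist u w = 3 by omega)
    · have hwv1 : G.Adj w v := by rw [← dist_eq_one_iff_adj, SimpleGraph.dist_comm]; omega
      refine hfar ⟨w, hw⟩ ⟨v, hv⟩ ⟨u, hu⟩ hwv1 (by rwa [SimpleGraph.dist_comm])
        (show G.dist w u = 3 by rw [SimpleGraph.dist_comm]; omega)

theorem one_lt_dist_of_not_reachable_induce (hG : G.Connected) {u v : S}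
    (h : ¬(G.induce S).Reachable u v) : 1 < G.dist (u : V) v :=
  hG.one_lt_dist_of_ne_of_not_adj (fun he ↦ h (Subtype.ext he ▸ .rfl))
    (fun ha ↦ h (Adj.reachable (G := G.induce S) ha))

section CliqueComponents

variable (hcl : ∀ u v : S, (G.induce S).Reachable u v → u = v ∨ (G.induce S).Adj u v)
include hcl

theorem dist_le_one_of_reachable_induce {u v : S} (h : (G.induce S).Reachable u v) :
    G.dist (u : V) v ≤ 1 := by
  rcases hcl u v h with rfl | (huv : G.Adj u v)
  · simp
  · exact (dist_eq_one_iff_adj.mpr huv).le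

theorem dist_eq_two_of_reachable_induce (hG : G.Connected)
    (hfar : ∀ u v w : S, (G.induce S).Adj u v → G.dist (v : V) w = 2 → G.dist (u : V) w ≠ 3)
    {u v y : S} (huv : ¬(G.induce S).Reachable u v) (hd : G.dist (u : V) v = 2)
    (hvy : (G.induce S).Reachable v y) : G.dist (u : V) y = 2 := by
  have hlower := one_lt_dist_of_not_reachable_induce hG fun huy ↦ huv (huy.trans hvy.symm)
  rcases hcl v y hvy with rfl | hadj
  · exact hd
  have hupper := hG.dist_triangle (u := (u : V)) (v := v) (w := y)
  rw [hd, dist_eq_one_iff_adj.mpr (show G.Adj v y from hadj)] at hupper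
  have hne := hfar y v u hadj.symm (by rwa [SimpleGraph.dist_comm])
  rw [SimpleGraph.dist_comm] at hne
  omega

theorem forall_dist_ne_three_iff (hG : G.Connected) :
    (∀ u v w : S, (G.induce S).Adj u v → G.dist (v : V) w = 2 → G.dist (u : V) w ≠ 3) ↔
      ∀ u v x y : S, ¬(G.induce S).Reachable u v → G.dist (u : V) v = 2 →
        (G.induce S).Reachable u x → (G.induce S).Reachable v y → G.dist (x : V) y = 2 := by
  refine ⟨fun hfar u v x y huv hd hux hvy ↦ ?_, fun h u v w huv hvw ↦ ?_⟩
  · have hxv : G.dist (x : V) v = 2 := by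
      rw [SimpleGraph.dist_comm]
      exact dist_eq_two_of_reachable_induce hcl hG hfar (mt Reachable.symm huv)
        (by rwa [SimpleGraph.dist_comm]) hux
    exact dist_eq_two_of_reachable_induce hcl hG hfar (fun hxv ↦ huv (hux.trans hxv)) hxv hvy
  · have hvw' : ¬(G.induce S).Reachable v w := fun hr ↦ by
      have := dist_le_one_of_reachable_induce hcl hr
      omega
    rw [h v w u w hvw' hvw huv.reachable.symm .rfl]
    decide

end CliqueComponents

theorem isGP3Set_iff_general {V : Type*} (G : SimpleGraph V) (hG : G.Connected)
    (S : Set V) :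
    isGP3Set G S ↔
      ((∀ u v : S, (G.induce S).Reachable u v → u = v ∨ (G.induce S).Adj u v) ∧
       (∀ u v x y : S, ¬ (G.induce S).Reachable u v → G.dist (u : V) (v : V) = 2 →
          (G.induce S).Reachable u x → (G.induce S).Reachable v y →
          G.dist (x : V) (y : V) = 2)) := by
  rw [isGP3Set_iff_of_connected hG, ← forall_reachable_eq_or_adj_iff]
  exact and_congr_right fun hcl ↦ forall_dist_ne_three_iff hcl hG

/-- Characterization of `3`-general position sets: `S` is a `3`-general position set
iff the connected components of the induced subgraph `G[S]` are cliques, and whenever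
`u, v ∈ S` lie in different components with `d_G(u,v) = 2`, then `d_G(x,y) = 2` for
every `x` in the component of `u` and every `y` in the component of `v`. -/
theorem isGP3Set_iff {V : Type*} [Fintype V] (G : SimpleGraph V) (hG : G.Connected)
    (S : Set V) :
    isGP3Set G S ↔
      ((∀ u v : S, (G.induce S).Reachable u v → u = v ∨ (G.induce S).Adj u v) ∧
       (∀ u v x y : S, ¬ (G.induce S).Reachable u v → G.dist (u : V) (v : V) = 2 →
          (G.induce S).Reachable u x → (G.induce S).Reachable v y →
          G.dist (x : V) (y : V) = 2)) :=
  isGP3Set_iff_general G hG S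
end

section
/- For every n ≥ 2, the complementary prism of the complete graph K_n satisfies gp(K_n\bar{K}_n) = n. -/
open SimpleGraph

variable {V : Type*}

/-!
The copy of `K_n` is a clique, hence in general position, which gives `n`. The other copy is
edgeless, so each `inr a` is a pendant vertex at `inl a`: distances are `1` inside the clique,
`2` between `inr a` and `inl b` and `3` between `inr a` and `inr b`. Hence `inl a` lies on a
geodesic from `inr a` to every third vertex, so a general position set containing a matched pair
has only two elements; otherwise it meets each matched pair at most once and has at most `n`.
-/

namespace SimpleGraph

variable {V : Type*} {G : SimpleGraph V}

lemma IsClique.isGenPosSet {S : Set V} (hS : G.IsClique S) : isGenPosSet G S := by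
  intro u hu v hv w hw huv hvw huw ⟨_, hdist⟩
  rw [dist_eq_one_iff_adj.2 (hS hu hv huv), dist_eq_one_iff_adj.2 (hS hv hw hvw),
    dist_eq_one_iff_adj.2 (hS hu hw huw)] at hdist
  omega

lemma dist_eq_dist_add_one_of_forall_adj_eq {u v w : V} (hvu : G.Adj v u)
    (hu : ∀ x, G.Adj v x → x = u) (hwv : w ≠ v) (hr : G.Reachable u w) :
    G.dist v w = G.dist u w + 1 := by
  refine le_antisymm ?_ ?_
  · obtain ⟨p, hp⟩ := hr.exists_walk_length_eq_dist
    simpa [← hp] using G.dist_le (Walk.cons hvu p)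
  · obtain ⟨p, hp⟩ := (hvu.reachable.trans hr).exists_walk_length_eq_dist
    cases p with
    | nil => exact absurd rfl hwv
    | cons hvx q =>
      obtain rfl := hu _ hvx
      simpa [← hp] using G.dist_le q

end SimpleGraph

lemma gpNum_eq_of_isGenPosSet {V : Type*} {G : SimpleGraph V} {S : Set V} {k : ℕ}
    (hS : isGenPosSet G S) (hcard : S.ncard = k)
    (hle : ∀ T : Set V, isGenPosSet G T → T.ncard ≤ k) : gpNum G = k := by
  have hbdd : ∀ m ∈ {m : ℕ | ∃ T : Set V, isGenPosSet G T ∧ T.ncard = m}, m ≤ k := by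
    rintro m ⟨T, hT, rfl⟩
    exact hle T hT
  exact le_antisymm (csSup_le ⟨k, S, hS, hcard⟩ hbdd) (le_csSup ⟨k, hbdd⟩ ⟨S, hS, hcard⟩)

section compPrismTop

variable {V : Type*} {a b : V}

lemma isClique_range_inl_compPrism_top :
    (compPrism (⊤ : SimpleGraph V)).IsClique (Set.range Sum.inl) := by
  rintro _ ⟨a, rfl⟩ _ ⟨b, rfl⟩ hab
  simpa using hab

lemma compPrism_top_dist_inl_inl (hab : a ≠ b) :
    (compPrism (⊤ : SimpleGraph V)).dist (.inl a) (.inl b) = 1 :=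
  dist_eq_one_iff_adj.2 hab

lemma compPrism_top_preconnected : (compPrism (⊤ : SimpleGraph V)).Preconnected := by
  have hinl : ∀ a w, (compPrism (⊤ : SimpleGraph V)).Reachable (.inl a) w := by
    have hl : ∀ a b, (compPrism (⊤ : SimpleGraph V)).Reachable (.inl a) (.inl b) := by
      intro a b
      rcases eq_or_ne a b with rfl | hab
      · rfl
      · exact (compPrism_adj_inl_inl.2 hab).reachable
    rintro a (b | b)
    · exact hl a b
    · exact (hl a b).trans (compPrism_adj_inl_inr.2 rfl).reachable
  rintro (a | a) w
  · exact hinl a w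
  · exact (compPrism_adj_inr_inl.2 rfl).reachable.trans (hinl a w)

/-- The copy of `⊥ = ⊤ᶜ` is edgeless, so `inr a` is a pendant vertex attached to `inl a`. -/
lemma compPrism_top_dist_inr {w : V ⊕ V} (hw : w ≠ .inr a) :
    (compPrism (⊤ : SimpleGraph V)).dist (.inr a) w =
      (compPrism (⊤ : SimpleGraph V)).dist (.inl a) w + 1 := by
  refine dist_eq_dist_add_one_of_forall_adj_eq rfl ?_ hw (compPrism_top_preconnected _ _)
  rintro (x | x) h
  · simp_all
  · simp at h

lemma compPrism_top_dist_inr_inl (hab : a ≠ b) :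
    (compPrism (⊤ : SimpleGraph V)).dist (.inr a) (.inl b) = 2 := by
  rw [compPrism_top_dist_inr (by simp), compPrism_top_dist_inl_inl hab]

lemma compPrism_top_dist_inr_inr (hab : a ≠ b) :
    (compPrism (⊤ : SimpleGraph V)).dist (.inr a) (.inr b) = 3 := by
  rw [compPrism_top_dist_inr (by simpa using hab.symm), SimpleGraph.dist_comm,
    compPrism_top_dist_inr_inl hab.symm]

/-- A matched pair `inl a, inr a` blocks every third vertex: `inl a` lies on a geodesic from
`inr a` to any `inl b`, and from any `inr b` to `inr a`. -/
lemma subset_pair_of_isGenPosSet_compPrism_top {S : Set (V ⊕ V)}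
    (hS : isGenPosSet (compPrism (⊤ : SimpleGraph V)) S)
    (hl : .inl a ∈ S) (hr : .inr a ∈ S) : S ⊆ {.inl a, .inr a} := by
  rintro (b | b) hb
  all_goals
    by_contra hne
    have hba : b ≠ a := by rintro rfl; simp at hne
  · refine hS _ hr _ hl _ hb (by simp) (by simpa using hba.symm) (by simp)
      ⟨compPrism_top_preconnected _ _, ?_⟩
    rw [SimpleGraph.dist_comm, compPrism_dist_inl_inr_self, compPrism_top_dist_inl_inl hba.symm,
      compPrism_top_dist_inr_inl hba.symm]
  · refine hS _ hb _ hl _ hr (by simp) (by simp) (by simpa using hba)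
      ⟨compPrism_top_preconnected _ _, ?_⟩
    rw [compPrism_top_dist_inr_inl hba, compPrism_dist_inl_inr_self,
      compPrism_top_dist_inr_inr hba]

lemma ncard_le_of_isGenPosSet_compPrism_top [Finite V] {S : Set (V ⊕ V)}
    (hS : isGenPosSet (compPrism (⊤ : SimpleGraph V)) S) : S.ncard ≤ max (Nat.card V) 2 := by
  by_cases hpair : ∃ a, .inl a ∈ S ∧ .inr a ∈ S
  · obtain ⟨a, hl, hr⟩ := hpair
    calc S.ncard ≤ ({.inl a, .inr a} : Set (V ⊕ V)).ncard :=
          Set.ncard_le_ncard (subset_pair_of_isGenPosSet_compPrism_top hS hl hr)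
      _ ≤ 2 := (Set.ncard_insert_le _ _).trans (by simp)
      _ ≤ _ := le_max_right _ _
  · have hinj : Set.InjOn (Sum.elim id id) S := by
      rintro (x | x) hx (y | y) hy hxy <;> simp only [Sum.elim_inl, Sum.elim_inr, id] at hxy
      · rw [hxy]
      · exact absurd ⟨x, hx, hxy ▸ hy⟩ hpair
      · exact absurd ⟨x, hxy ▸ hy, hx⟩ hpair
      · rw [hxy]
    calc S.ncard = (Sum.elim id id '' S).ncard := hinj.ncard_image.symm
      _ ≤ Nat.card V := Set.ncard_le_card _
      _ ≤ _ := le_max_left _ _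

end compPrismTop

/-- For `n ≥ 2`, the complementary prism of the complete graph satisfies
`gp(K_n \bar{K_n}) = n`. -/
theorem gp_compPrism_completeGraph (n : ℕ) (hn : 2 ≤ n) :
    gpNum (compPrism (⊤ : SimpleGraph (Fin n))) = n := by
  refine gpNum_eq_of_isGenPosSet isClique_range_inl_compPrism_top.isGenPosSet ?_ fun S hS => ?_
  · simp [Set.ncard_range_of_injective Sum.inl_injective]
  · simpa [max_eq_left hn] using ncard_le_of_isGenPosSet_compPrism_top hS
end

section
/- If G is a finite connected bipartite graph, then n(G) ≤ gp(G\bar{G}) ≤ n(G) + 1. -/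
open SimpleGraph

variable {V : Type*}

/-!
In `G\bar{G}` the two copies `inl u`, `inr v` of distinct vertices are at distance `2`. Hence a
general position set `S` contains both copies of at most one vertex: for two such vertices
`u ≠ v`, `inl v` lies on the geodesic `inl u, inl v, inr v` if `u v` is an edge of `G`, and
`inr u` on `inl u, inr u, inr v` otherwise. So `|S| ≤ n + 1`.

For a bipartition `V = A ∪ B` of `G`, the set `inr '' A ∪ inl '' B` has `n` vertices, and its
distances are `1` inside `inr '' A` (a clique of `\bar{G}`), `2` between the copies and `2` or
`3` inside `inl '' B`. With weight `1` on `inl '' B` and `0` on `inr '' A` every distance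
`d(x, y)` of distinct vertices lies in `(w x, w x + w y + 1]`, which rules out geodesics
through a third vertex.
-/

namespace Set

theorem ncard_preimage_inl_add_ncard_preimage_inr_s9 {α β : Type*} [Finite α] [Finite β]
    (s : Set (α ⊕ β)) : (Sum.inl ⁻¹' s).ncard + (Sum.inr ⁻¹' s).ncard = s.ncard := by
  conv_rhs => rw [← image_preimage_inl_union_image_preimage_inr s]
  rw [ncard_union_eq disjoint_image_inl_image_inr, ncard_image_of_injective _ Sum.inl_injective,
    ncard_image_of_injective _ Sum.inr_injective]

end Set

section GeneralPosition

variable {H : SimpleGraph V}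

theorem le_gpNum [Finite V] {S : Set V} (hS : isGenPosSet H S) : S.ncard ≤ gpNum H := by
  refine le_csSup ⟨Nat.card V, ?_⟩ ⟨S, hS, rfl⟩
  rintro _ ⟨T, -, rfl⟩
  exact Set.ncard_le_card T

theorem gpNum_le {n : ℕ} (h : ∀ S, isGenPosSet H S → S.ncard ≤ n) : gpNum H ≤ n :=
  csSup_le' <| by
    rintro _ ⟨S, hS, rfl⟩
    exact h S hS

/-- For distinct `u, v, z ∈ S`: `d(u, v) + d(v, z) ≥ w u + w z + 2 > d(u, z)`. -/
theorem isGenPosSet_of_weight_lt_dist_le (S : Set V) (w : V → ℕ)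
    (hlow : ∀ x ∈ S, ∀ y ∈ S, x ≠ y → w x < H.dist x y)
    (hup : ∀ x ∈ S, ∀ y ∈ S, H.dist x y ≤ w x + w y + 1) :
    isGenPosSet H S := by
  rintro u hu v hv z hz huv hvz - ⟨-, hgeod⟩
  have h₁ := hlow u hu v hv huv
  have h₂ := hlow z hz v hv hvz.symm
  have h₃ := hup u hu z hz
  rw [H.dist_comm (u := v)] at hgeod
  omega

end GeneralPosition

namespace compPrism

open Sum

variable (G : SimpleGraph V)

@[simp] theorem adj_inl_inl {u v : V} : (compPrism G).Adj (inl u) (inl v) ↔ G.Adj u v := Iff.rfl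

@[simp] theorem adj_inr_inr {u v : V} : (compPrism G).Adj (inr u) (inr v) ↔ Gᶜ.Adj u v :=
  Iff.rfl

@[simp] theorem adj_inl_inr {u v : V} : (compPrism G).Adj (inl u) (inr v) ↔ u = v := Iff.rfl

@[simp] theorem adj_inr_inl {u v : V} : (compPrism G).Adj (inr u) (inl v) ↔ u = v := Iff.rfl

/-- Either `u v` is an edge of `G` or of `Gᶜ`, which gives a path through `inl v` or `inr u`. -/
theorem exists_walk_inl_inr (u v : V) :
    ∃ p : (compPrism G).Walk (inl u) (inr v), p.length ≤ 2 := by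
  have hmatch (w : V) : (compPrism G).Adj (inl w) (inr w) := rfl
  by_cases huv : u = v
  · subst huv
    exact ⟨(hmatch u).toWalk, by simp⟩
  by_cases hadj : G.Adj u v
  · exact ⟨Walk.cons (show (compPrism G).Adj (inl u) (inl v) from hadj) (hmatch v).toWalk,
      by simp⟩
  · have hcompl : (compPrism G).Adj (inr u) (inr v) := (compl_adj G u v).mpr ⟨huv, hadj⟩
    exact ⟨Walk.cons (hmatch u) hcompl.toWalk, by simp⟩

theorem dist_inl_inr_le_two (u v : V) : (compPrism G).dist (inl u) (inr v) ≤ 2 :=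
  let ⟨p, hp⟩ := exists_walk_inl_inr G u v
  (dist_le p).trans hp

theorem dist_inl_inl_le_three (u v : V) : (compPrism G).dist (inl u) (inl v) ≤ 3 :=
  let ⟨p, hp⟩ := exists_walk_inl_inr G u v
  (dist_le (p.concat (show (compPrism G).Adj (inr v) (inl v) from rfl))).trans
    (by rw [Walk.length_concat]; omega)

theorem preconnected : (compPrism G).Preconnected := by
  have hinl_inr (u v : V) : (compPrism G).Reachable (inl u) (inr v) :=
    (exists_walk_inl_inr G u v).elim fun p _ => ⟨p⟩
  have hinr_inl (u v : V) : (compPrism G).Reachable (inr u) (inl v) :=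
    (hinl_inr v u).symm
  rintro (u | u) (v | v)
  · exact (hinl_inr u v).trans (Adj.reachable (by simp))
  · exact hinl_inr u v
  · exact hinr_inl u v
  · exact (hinr_inl u u).trans (hinl_inr u v)

theorem dist_inl_inr {u v : V} (h : u ≠ v) : (compPrism G).dist (inl u) (inr v) = 2 := by
  have := (preconnected G (inl u) (inr v)).one_lt_dist_of_ne_of_not_adj (by simp)
    (by simpa using h)
  have := dist_inl_inr_le_two G u v
  omega

theorem dist_inr_inr_of_not_adj {u v : V} (h : u ≠ v) (hadj : ¬ G.Adj u v) :
    (compPrism G).dist (inr u) (inr v) = 1 :=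
  dist_eq_one_iff_adj.mpr (by simp [compl_adj, h, hadj])

theorem subsingleton_of_isGenPosSet {S : Set (V ⊕ V)} (hS : isGenPosSet (compPrism G) S) :
    (inl ⁻¹' S ∩ inr ⁻¹' S).Subsingleton := by
  rintro u ⟨huL, huR⟩ v ⟨hvL, hvR⟩
  by_contra huv
  have hreach := preconnected G (inl u) (inr v)
  by_cases hadj : G.Adj u v
  · refine hS _ huL _ hvL _ hvR (by simpa using huv) (by simp) (by simp) ⟨hreach, ?_⟩
    rw [dist_eq_one_iff_adj.mpr (by simpa using hadj), dist_eq_one_iff_adj.mpr (by simp),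
      dist_inl_inr G huv]
  · refine hS _ huL _ huR _ hvR (by simp) (by simpa using huv) (by simp) ⟨hreach, ?_⟩
    rw [dist_eq_one_iff_adj.mpr (by simp), dist_inr_inr_of_not_adj G huv hadj,
      dist_inl_inr G huv]

theorem ncard_le_of_isGenPosSet [Finite V] {S : Set (V ⊕ V)}
    (hS : isGenPosSet (compPrism G) S) : S.ncard ≤ Nat.card V + 1 := by
  have hinter := Set.ncard_le_one_iff_subsingleton.mpr (subsingleton_of_isGenPosSet G hS)
  have hunion := Set.ncard_le_card (inl ⁻¹' S ∪ inr ⁻¹' S)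
  rw [← Set.ncard_preimage_inl_add_ncard_preimage_inr_s9, ← Set.ncard_union_add_ncard_inter]
  omega

theorem isGenPosSet_of_isIndepSet {A B : Set V} (hA : G.IsIndepSet A) (hB : G.IsIndepSet B)
    (hAB : Disjoint A B) : isGenPosSet (compPrism G) (inr '' A ∪ inl '' B) := by
  refine isGenPosSet_of_weight_lt_dist_le _ (Sum.elim (fun _ => 1) fun _ => 0) ?_ ?_
  · rintro _ (⟨a, ha, rfl⟩ | ⟨b, hb, rfl⟩) _ (⟨a', ha', rfl⟩ | ⟨b', hb', rfl⟩) hne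
    · exact (preconnected G _ _).pos_dist_of_ne hne
    · exact (preconnected G _ _).pos_dist_of_ne hne
    · simp [dist_inl_inr G (hAB.ne_of_mem ha' hb).symm]
    · exact (preconnected G _ _).one_lt_dist_of_ne_of_not_adj hne
        (by simpa using hB hb hb' (by simpa using hne))
  · rintro _ (⟨a, ha, rfl⟩ | ⟨b, hb, rfl⟩) _ (⟨a', ha', rfl⟩ | ⟨b', hb', rfl⟩)
    · obtain rfl | hne := eq_or_ne a a'
      · simp
      · simp [dist_inr_inr_of_not_adj G hne (hA ha ha' hne)]
    · simpa [dist_comm] using dist_inl_inr_le_two G b' a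
    · simpa using dist_inl_inr_le_two G b a'
    · simpa using dist_inl_inl_le_three G b b'

theorem card_le_gpNum_of_coloring [Finite V] (c : G.Coloring (Fin 2)) :
    Nat.card V ≤ gpNum (compPrism G) := by
  have hcompl : c.colorClass 1 = (c.colorClass 0)ᶜ := by
    ext v
    simp only [Coloring.colorClass, Set.mem_ofPred_eq, Set.mem_compl_iff]
    omega
  have hS := isGenPosSet_of_isIndepSet G (c.isIndepSet_colorClass 0) (c.isIndepSet_colorClass 1)
    (hcompl ▸ disjoint_compl_right)
  calc Nat.card V = (c.colorClass 1).ncard + (c.colorClass 0).ncard := by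
        rw [hcompl, add_comm, Set.ncard_add_ncard_compl]
    _ = (inr '' c.colorClass 0 ∪ inl '' c.colorClass 1).ncard := by
        rw [← Set.ncard_preimage_inl_add_ncard_preimage_inr_s9]
        simp [Set.preimage_image_eq _ inl_injective, Set.preimage_image_eq _ inr_injective]
    _ ≤ gpNum (compPrism G) := le_gpNum hS

theorem gpNum_le_card_add_one [Finite V] : gpNum (compPrism G) ≤ Nat.card V + 1 :=
  gpNum_le fun _ hS => ncard_le_of_isGenPosSet G hS

end compPrism

theorem gp_compPrism_bipartite_bounds_general {V : Type*} [Fintype V] (G : SimpleGraph V)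
    (hbip : G.Colorable 2) :
    Fintype.card V ≤ gpNum (compPrism G) ∧ gpNum (compPrism G) ≤ Fintype.card V + 1 := by
  obtain ⟨c⟩ := hbip
  rw [← Nat.card_eq_fintype_card]
  exact ⟨compPrism.card_le_gpNum_of_coloring G c, compPrism.gpNum_le_card_add_one G⟩

/-- For a connected bipartite graph `G`: `n(G) ≤ gp(G\bar{G}) ≤ n(G) + 1`. -/
theorem gp_compPrism_bipartite_bounds {V : Type*} [Fintype V] (G : SimpleGraph V)
    (hG : G.Connected) (hbip : G.Colorable 2) :
    Fintype.card V ≤ gpNum (compPrism G) ∧ gpNum (compPrism G) ≤ Fintype.card V + 1 :=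
  gp_compPrism_bipartite_bounds_general G hbip
end

section
/- Let T be a finite tree with n(T) ≥ 2. Then gp(T\bar{T}) = n(T) + 1 if the diameter of T equals 4, and gp(T\bar{T}) = n(T) otherwise. -/
open SimpleGraph

variable {V : Type*}

/-!
In `compPrism G` every vertex is at distance at most `2` from each vertex of the other copy, so
all distances are at most `3`. Hence three points of a set `S` can lie on a geodesic only through
an edge inside `S`, and `S` is in general position as soon as the two ends of every such edge are
equidistant from the rest of `S`.

A general position set contains both copies of at most one vertex `v`, so it has at most `n + 1`
elements; with `n + 1` elements it meets every pair `{inl x, inr x}`, which forces every vertex to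
be within distance `2` of `v` and every neighbour of `v` to share a non-neighbour with `v`. In a
tree such a vertex exists exactly when the diameter is `4`: it is the middle of a diametral path.
Conversely, a bipartition `A, Aᶜ` of the tree gives the general position set `inl '' A ∪ inr '' Aᶜ`
of size `n`, and when `A` is the set of non-neighbours of such a `v`, the vertex `inr v` can be
added to it.
-/

namespace SimpleGraph

section GeneralPosition

variable {W : Type*} {G : SimpleGraph W} {S : Set W}

lemma dist_add_dist_ne_of_isGenPosSet (hG : G.Preconnected) (hS : isGenPosSet G S) {x y z : W}
    (hx : x ∈ S) (hy : y ∈ S) (hz : z ∈ S) (hxy : x ≠ y) (hyz : y ≠ z) (hxz : x ≠ z) :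
    G.dist x y + G.dist y z ≠ G.dist x z :=
  fun h ↦ hS x hx y hy z hz hxy hyz hxz ⟨hG x z, h⟩

lemma isGenPosSet_of_dist_eq_dist_of_adj (hG : G.Preconnected)
    (hS3 : ∀ x ∈ S, ∀ y ∈ S, G.dist x y ≤ 3)
    (hS : ∀ x ∈ S, ∀ y ∈ S, ∀ z ∈ S, G.Adj x y → z ≠ x → z ≠ y → G.dist x z = G.dist y z) :
    isGenPosSet G S := by
  rintro x hx y hy z hz hxy hyz hxz ⟨-, h⟩
  have hxy_pos := (hG x y).pos_dist_of_ne hxy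
  have hyz_pos := (hG y z).pos_dist_of_ne hyz
  by_cases hxy1 : G.dist x y = 1
  · have := hS x hx y hy z hz (dist_eq_one_iff_adj.mp hxy1) (Ne.symm hxz) (Ne.symm hyz)
    omega
  by_cases hyz1 : G.dist y z = 1
  · have := hS z hz y hy x hx (dist_eq_one_iff_adj.mp (dist_comm.trans hyz1)) hxz hxy
    rw [dist_comm (u := z), dist_comm (u := y) (v := x)] at this
    omega
  have := hS3 x hx z hz
  omega

lemma gpNum_eq_of_forall_ncard_le {k : ℕ} (hS : isGenPosSet G S) (hk : S.ncard = k)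
    (hle : ∀ S, isGenPosSet G S → S.ncard ≤ k) : gpNum G = k :=
  IsGreatest.csSup_eq ⟨⟨S, hS, hk⟩, by rintro _ ⟨S, hS, rfl⟩; exact hle S hS⟩

end GeneralPosition

section Metric

variable {W : Type*} {G : SimpleGraph W} {u w : W}

lemma dist_eq_two_iff :
    G.dist u w = 2 ↔ u ≠ w ∧ ¬G.Adj u w ∧ (G.commonNeighbors u w).Nonempty := by
  rw [← edist_eq_two_iff, dist, ENat.toNat_eq_iff two_ne_zero]
  rfl

lemma dist_le_two_of_adj_of_adj {x : W} (hux : G.Adj u x) (hxw : G.Adj x w) : G.dist u w ≤ 2 :=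
  dist_le (.cons hux (.cons hxw .nil))

lemma isGreatest_graphDiam [Finite W] (hG : G.Connected) :
    IsGreatest {n | ∃ u v : W, G.dist u v = n} (graphDiam G) := by
  have : Nonempty W := hG.nonempty
  have h : IsGreatest {n | ∃ u v : W, G.dist u v = n} G.diam :=
    ⟨exists_dist_eq_diam, by
      rintro _ ⟨u, v, rfl⟩; exact dist_le_diam (connected_iff_ediam_ne_top.mp hG)⟩
  rwa [graphDiam, h.csSup_eq]

end Metric

section CompPrism

variable {G : SimpleGraph V} {u w : V}

@[simp] lemma compPrism_adj_inl_inl : (compPrism G).Adj (.inl u) (.inl w) ↔ G.Adj u w := Iff.rfl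
@[simp] lemma compPrism_adj_inr_inr : (compPrism G).Adj (.inr u) (.inr w) ↔ Gᶜ.Adj u w := Iff.rfl
@[simp] lemma compPrism_adj_inl_inr : (compPrism G).Adj (.inl u) (.inr w) ↔ u = w := Iff.rfl
@[simp] lemma compPrism_adj_inr_inl : (compPrism G).Adj (.inr u) (.inl w) ↔ u = w := Iff.rfl

lemma compPrism_dist_inl_inr_self (u : V) : (compPrism G).dist (.inl u) (.inr u) = 1 :=
  dist_eq_one_iff_adj.mpr rfl

lemma compPrism_dist_inr_inl_self (u : V) : (compPrism G).dist (.inr u) (.inl u) = 1 :=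
  dist_eq_one_iff_adj.mpr rfl

lemma compPrism_dist_inl_inr (h : u ≠ w) : (compPrism G).dist (.inl u) (.inr w) = 2 := by
  refine dist_eq_two_iff.mpr ⟨by simp, by simpa, ?_⟩
  by_cases hadj : G.Adj u w
  · exact ⟨.inl w, by simpa, by simp⟩
  · exact ⟨.inr u, by simp, by simp [hadj, Ne.symm h, G.adj_comm]⟩

lemma compPrism_dist_inr_inl (h : u ≠ w) : (compPrism G).dist (.inr u) (.inl w) = 2 := by
  rw [dist_comm, compPrism_dist_inl_inr (Ne.symm h)]

lemma compPrism_dist_inl_inr_le_two (u w : V) : (compPrism G).dist (.inl u) (.inr w) ≤ 2 := by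
  by_cases h : u = w
  · rw [h, compPrism_dist_inl_inr_self]; omega
  · rw [compPrism_dist_inl_inr h]

lemma compPrism_connected [Nonempty V] : (compPrism G).Connected := by
  have hmixed (u w : V) : (compPrism G).Reachable (.inl u) (.inr w) :=
    Reachable.of_dist_ne_zero (by by_cases h : u = w <;> simp [h, compPrism_dist_inl_inr,
      compPrism_dist_inl_inr_self])
  refine connected_iff_exists_forall_reachable _ |>.mpr ⟨.inl (Classical.arbitrary V), ?_⟩
  rintro (w | w)
  · exact (hmixed _ w).trans (hmixed w w).symm
  · exact hmixed _ w

lemma compPrism_preconnected : (compPrism G).Preconnected := by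
  rintro (u | u) y <;> · have : Nonempty V := ⟨u⟩; exact compPrism_connected.preconnected _ y

lemma compPrism_dist_le_three (x y : V ⊕ V) : (compPrism G).dist x y ≤ 3 := by
  have : Nonempty V := by rcases x with u | u <;> exact ⟨u⟩
  have hle (x y z : V ⊕ V) := compPrism_connected.dist_triangle (G := compPrism G) (u := x)
    (v := y) (w := z)
  rcases x with u | u <;> rcases y with w | w
  · have := hle (.inl u) (.inr w) (.inl w)
    rw [compPrism_dist_inr_inl_self] at this
    linarith [compPrism_dist_inl_inr_le_two (G := G) u w]
  · linarith [compPrism_dist_inl_inr_le_two (G := G) u w]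
  · rw [dist_comm]; linarith [compPrism_dist_inl_inr_le_two (G := G) w u]
  · have := hle (.inr u) (.inl w) (.inr w)
    have h2 := compPrism_dist_inl_inr_le_two (G := G) w u
    rw [compPrism_dist_inl_inr_self] at this
    rw [dist_comm] at h2
    linarith

lemma compPrism_dist_inl_inl_of_dist_eq_two (h : G.dist u w = 2) :
    (compPrism G).dist (.inl u) (.inl w) = 2 := by
  obtain ⟨hne, hna, x, hx⟩ := dist_eq_two_iff.mp h
  exact dist_eq_two_iff.mpr ⟨by simpa, by simpa, .inl x, by simpa [mem_commonNeighbors] using hx⟩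

lemma compPrism_dist_inl_inl_of_three_le (h : 3 ≤ G.dist u w) :
    (compPrism G).dist (.inl u) (.inl w) = 3 := by
  have : Nonempty V := ⟨u⟩
  have hne : u ≠ w := by rintro rfl; simp at h
  have hna : ¬G.Adj u w := fun ha ↦ by rw [dist_eq_one_iff_adj.mpr ha] at h; omega
  have h2 : (compPrism G).dist (.inl u) (.inl w) ≠ 2 := by
    rw [Ne, dist_eq_two_iff]
    rintro ⟨-, -, (x | x), hx⟩
    · simp only [mem_commonNeighbors, compPrism_adj_inl_inl] at hx
      have := dist_le_two_of_adj_of_adj hx.1 hx.2.symm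
      omega
    · simp only [mem_commonNeighbors, compPrism_adj_inl_inr] at hx
      exact hne (hx.1.trans hx.2.symm)
  have h1 := compPrism_connected.one_lt_dist_of_ne_of_not_adj
    (G := compPrism G) (u := .inl u) (v := .inl w) (by simpa) (by simpa)
  have h3 := compPrism_dist_le_three (G := G) (.inl u) (.inl w)
  omega

lemma compPrism_dist_inr_inr_of_adj (h : G.Adj u w) (hc : (Gᶜ.commonNeighbors u w).Nonempty) :
    (compPrism G).dist (.inr u) (.inr w) = 2 := by
  obtain ⟨x, hx⟩ := hc
  exact dist_eq_two_iff.mpr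
    ⟨by simpa using h.ne, by simp [h], .inr x, by simpa [mem_commonNeighbors] using hx⟩

lemma compPrism_dist_inr_inr_of_adj_of_eq_empty (h : G.Adj u w)
    (hc : Gᶜ.commonNeighbors u w = ∅) :
    (compPrism G).dist (.inr u) (.inr w) = 3 := by
  have : Nonempty V := ⟨u⟩
  have h2 : (compPrism G).dist (.inr u) (.inr w) ≠ 2 := by
    rw [Ne, dist_eq_two_iff]
    rintro ⟨-, -, (x | x), hx⟩
    · simp only [mem_commonNeighbors, compPrism_adj_inr_inl] at hx
      exact h.ne (hx.1.trans hx.2.symm)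
    · exact (Set.eq_empty_iff_forall_notMem.mp hc) x (by simpa [mem_commonNeighbors] using hx)
  have h1 := compPrism_connected.one_lt_dist_of_ne_of_not_adj
    (G := compPrism G) (u := .inr u) (v := .inr w) (by simpa using h.ne) (by simp [h])
  have h3 := compPrism_dist_le_three (G := G) (.inr u) (.inr w)
  omega

end CompPrism

lemma ncard_image_inl_union_image_inr {α β : Type*} [Finite α] [Finite β] (A : Set α)
    (B : Set β) : (Sum.inl '' A ∪ Sum.inr '' B).ncard = A.ncard + B.ncard := by
  rw [Set.ncard_union_eq Set.disjoint_image_inl_image_inr,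
    Set.ncard_image_of_injective _ Sum.inl_injective,
    Set.ncard_image_of_injective _ Sum.inr_injective]

/-- A vertex that can appear in both copies of a general position set of `compPrism G` meeting
every pair `{inl x, inr x}`. -/
def IsPrismCenter (G : SimpleGraph V) (v : V) : Prop :=
  (∀ w, G.dist v w ≤ 2) ∧ ∀ w, G.Adj v w → (Gᶜ.commonNeighbors v w).Nonempty

section UpperBound

variable {G : SimpleGraph V} {S : Set (V ⊕ V)}

lemma subsingleton_preimage_inl_inter_preimage_inr (hS : isGenPosSet (compPrism G) S) :
    (Sum.inl ⁻¹' S ∩ Sum.inr ⁻¹' S).Subsingleton := by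
  rintro v ⟨hv, hv'⟩ w ⟨hw, hw'⟩
  by_contra hne
  by_cases hadj : G.Adj v w
  · exact dist_add_dist_ne_of_isGenPosSet compPrism_preconnected hS hv hw hw' (by simpa)
      (by simp) (by simp) (by rw [dist_eq_one_iff_adj.mpr (by simpa), compPrism_dist_inl_inr_self,
        compPrism_dist_inl_inr hne])
  · exact dist_add_dist_ne_of_isGenPosSet compPrism_preconnected hS hv hv' hw' (by simp)
      (by simpa) (by simp) (by rw [compPrism_dist_inl_inr_self,
        dist_eq_one_iff_adj.mpr (by simp [hne, hadj]), compPrism_dist_inl_inr hne])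

lemma ncard_union_add_ncard_inter_preimage_inl_preimage_inr [Finite V] (S : Set (V ⊕ V)) :
    (Sum.inl ⁻¹' S ∪ Sum.inr ⁻¹' S).ncard + (Sum.inl ⁻¹' S ∩ Sum.inr ⁻¹' S).ncard = S.ncard := by
  rw [Set.ncard_union_add_ncard_inter, ← ncard_image_inl_union_image_inr,
    Set.image_preimage_inl_union_image_preimage_inr]

lemma ncard_le_card_add_one [Finite V] (hS : isGenPosSet (compPrism G) S) :
    S.ncard ≤ Nat.card V + 1 := by
  have := Set.ncard_le_one_iff_subsingleton.mpr (subsingleton_preimage_inl_inter_preimage_inr hS)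
  have := Set.ncard_le_card (Sum.inl ⁻¹' S ∪ Sum.inr ⁻¹' S)
  have := ncard_union_add_ncard_inter_preimage_inl_preimage_inr S
  omega

lemma isPrismCenter_of_isGenPosSet (hS : isGenPosSet (compPrism G) S)
    (hcover : ∀ w, Sum.inl w ∈ S ∨ Sum.inr w ∈ S) {v : V} (hv : Sum.inl v ∈ S)
    (hv' : Sum.inr v ∈ S) : IsPrismCenter G v := by
  have hA (w) (hw : Sum.inl w ∈ S) (hadj : G.Adj v w) : False :=
    dist_add_dist_ne_of_isGenPosSet compPrism_preconnected hS hv' hv hw (by simp)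
      (by simpa using hadj.ne) (by simp) (by rw [compPrism_dist_inr_inl_self,
        dist_eq_one_iff_adj.mpr (by simpa), compPrism_dist_inr_inl hadj.ne])
  have hB (w) (hw : Sum.inr w ∈ S) (hwv : w ≠ v) : G.Adj v w := by
    by_contra hna
    exact dist_add_dist_ne_of_isGenPosSet compPrism_preconnected hS hv hv' hw (by simp)
      (by simpa using hwv.symm) (by simp) (by rw [compPrism_dist_inl_inr_self,
        dist_eq_one_iff_adj.mpr (by simp [hna, hwv.symm]), compPrism_dist_inl_inr hwv.symm])
  refine ⟨fun w ↦ ?_, fun w hadj ↦ ?_⟩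
  · by_cases hwv : w = v
    · simp [hwv]
    rcases hcover w with hw | hw
    · by_contra! h3
      exact dist_add_dist_ne_of_isGenPosSet compPrism_preconnected hS hv hv' hw (by simp)
        (by simp) (by simpa using Ne.symm hwv) (by rw [compPrism_dist_inl_inr_self,
          compPrism_dist_inr_inl (Ne.symm hwv), compPrism_dist_inl_inl_of_three_le h3])
    · rw [dist_eq_one_iff_adj.mpr (hB w hw hwv)]; omega
  · have hw : Sum.inr w ∈ S := (hcover w).resolve_left fun hw ↦ hA w hw hadj
    by_contra hc
    exact dist_add_dist_ne_of_isGenPosSet compPrism_preconnected hS hv' hv hw (by simp)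
      (by simp) (by simpa using hadj.ne) (by rw [compPrism_dist_inr_inl_self,
        compPrism_dist_inl_inr hadj.ne,
        compPrism_dist_inr_inr_of_adj_of_eq_empty hadj (Set.not_nonempty_iff_eq_empty.mp hc)])

lemma exists_isPrismCenter_of_card_lt_ncard [Finite V] (hS : isGenPosSet (compPrism G) S)
    (hcard : Nat.card V < S.ncard) : ∃ v, IsPrismCenter G v := by
  have h1 := Set.ncard_le_one_iff_subsingleton.mpr (subsingleton_preimage_inl_inter_preimage_inr hS)
  have h2 := Set.ncard_le_card (Sum.inl ⁻¹' S ∪ Sum.inr ⁻¹' S)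
  have h3 := ncard_union_add_ncard_inter_preimage_inl_preimage_inr S
  have hcover : Sum.inl ⁻¹' S ∪ Sum.inr ⁻¹' S = Set.univ :=
    Set.eq_of_subset_of_ncard_le (Set.subset_univ _) (by rw [Set.ncard_univ]; omega)
  obtain ⟨v, hv, hv'⟩ := Set.nonempty_of_ncard_ne_zero (s := Sum.inl ⁻¹' S ∩ Sum.inr ⁻¹' S)
    (by omega)
  exact ⟨v, isPrismCenter_of_isGenPosSet hS (Set.eq_univ_iff_forall.mp hcover) hv hv'⟩

end UpperBound

section Tree

variable {W : Type*} {G : SimpleGraph W}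

lemma Connected.exists_dist_eq_and_dist_eq (hG : G.Connected) {u w : W} {a b : ℕ}
    (h : G.dist u w = a + b) : ∃ v, G.dist u v = a ∧ G.dist v w = b := by
  obtain ⟨p, hp⟩ := hG.exists_walk_length_eq_dist u w
  have ha := dist_le (p.take a)
  have hb := dist_le (p.drop a)
  rw [Walk.take_length] at ha
  rw [Walk.drop_length] at hb
  have := hG.dist_triangle (u := u) (v := p.getVert a) (w := w)
  exact ⟨p.getVert a, by omega, by omega⟩

lemma IsTree.eq_of_adj_of_dist_lt (hG : G.IsTree) {z v y y' : W} (hy : G.Adj v y)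
    (hy' : G.Adj v y') (h : G.dist z y < G.dist z v) (h' : G.dist z y' < G.dist z v) : y = y' := by
  classical
  obtain ⟨p, hp, -⟩ := hG.connected.exists_path_of_dist z v
  have key {y : W} (hy : G.Adj v y) (h : G.dist z y < G.dist z v) : y = p.penultimate := by
    obtain ⟨q, hq, hql⟩ := hG.connected.exists_path_of_dist z y
    have hv : v ∉ q.support := fun hv ↦ by
      have := dist_le (q.takeUntil v hv)
      have := q.length_takeUntil_le_length hv
      omega
    exact hG.isAcyclic.eq_penultimate_of_adj_end hp hy
      (hG.isAcyclic.mem_support_of_ne_mem_support_of_adj_of_isPath hp hq hy hv)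
  exact (key hy h).trans (key hy' h').symm

lemma IsTree.dist_eq_add_one_of_adj_of_ne (hG : G.IsTree) {z v y y' : W} (hy : G.Adj v y)
    (hy' : G.Adj v y') (hne : y ≠ y') (h : G.dist z y < G.dist z v) :
    G.dist z y' = G.dist z v + 1 :=
  (hG.dist_eq_dist_add_one_of_adj z hy').resolve_left
    fun h' ↦ hne (hG.eq_of_adj_of_dist_lt hy hy' h (by omega))

lemma IsPrismCenter.dist_eq_two (hG : G.Connected) {v x : W} (hv : IsPrismCenter G v)
    (hx : Gᶜ.Adj v x) : G.dist v x = 2 := by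
  have := hG.one_lt_dist_of_ne_of_not_adj hx.1 hx.2
  linarith [hv.1 x]

lemma IsTree.graphDiam_eq_four_of_isPrismCenter [Finite W] [Nontrivial W] (hG : G.IsTree)
    {v : W} (hv : IsPrismCenter G v) : graphDiam G = 4 := by
  have hfar {x : W} (hx : Gᶜ.Adj v x) : G.dist v x = 2 := hv.dist_eq_two hG.connected hx
  obtain ⟨hecc, hcn⟩ := hv
  obtain ⟨w, hw⟩ := hG.connected.preconnected.exists_adj_of_nontrivial v
  obtain ⟨x, hvx, -⟩ := hcn w hw
  obtain ⟨-, -, p, hvp, hxp⟩ := dist_eq_two_iff.mp (hfar hvx)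
  obtain ⟨z, hvz, hpz⟩ := hcn p hvp
  obtain ⟨-, -, q, hvq, hzq⟩ := dist_eq_two_iff.mp (hfar hvz)
  have hzv : G.dist z v = 2 := dist_comm.trans (hfar hvz)
  have hzq' : G.dist z q = 1 := dist_eq_one_iff_adj.mpr hzq
  have hqp : q ≠ p := by rintro rfl; exact hpz.2 hzq.symm
  have hzp : G.dist z p = 3 := by
    rw [hG.dist_eq_add_one_of_adj_of_ne hvq hvp hqp (by omega), hzv]
  have hzx : G.dist z x = 4 := by
    rw [hG.dist_eq_add_one_of_adj_of_ne hvp.symm hxp.symm hvx.1 (by omega), hzp]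
  refine (isGreatest_graphDiam hG.connected).unique ⟨⟨z, x, hzx⟩, ?_⟩
  rintro _ ⟨a, b, rfl⟩
  have := hG.connected.dist_triangle (u := a) (v := v) (w := b)
  linarith [hecc a, hecc b, dist_comm (G := G) (u := a) (v := v)]

lemma IsTree.exists_isPrismCenter_of_graphDiam_eq_four [Finite W] (hG : G.IsTree)
    (h : graphDiam G = 4) : ∃ v, IsPrismCenter G v := by
  obtain ⟨⟨u, w, huw⟩, hle⟩ := h ▸ isGreatest_graphDiam hG.connected
  have hle' (a b : W) : G.dist a b ≤ 4 := hle ⟨a, b, rfl⟩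
  obtain ⟨v, huv, hvw⟩ := hG.connected.exists_dist_eq_and_dist_eq (a := 2) (b := 2) huw
  obtain ⟨huv_ne, huv_na, x₁, hux₁, hvx₁⟩ := dist_eq_two_iff.mp huv
  obtain ⟨hvw_ne, hvw_na, x₃, hvx₃, hwx₃⟩ := dist_eq_two_iff.mp hvw
  have hx₁₃ : x₁ ≠ x₃ := by
    rintro rfl
    have := dist_le_two_of_adj_of_adj hux₁ hwx₃.symm
    omega
  refine ⟨v, fun z ↦ ?_, fun x hvx ↦ ?_⟩
  · have hfar {x y : W} (hvx : G.Adj v x) (hxy : G.Adj x y) (hyv : y ≠ v)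
        (hx : ¬G.dist z x < G.dist z v) : G.dist z y = G.dist z v + 2 := by
      have hzx : G.dist z x = G.dist z v + 1 :=
        (hG.dist_eq_dist_add_one_of_adj z hvx).resolve_left (by omega)
      have := hG.dist_eq_add_one_of_adj_of_ne (z := z) hvx.symm hxy hyv.symm (by omega)
      omega
    by_contra! hz
    rw [dist_comm] at hz
    by_cases hx₁ : G.dist z x₁ < G.dist z v
    · have := hfar hvx₃ hwx₃.symm hvw_ne.symm
        fun hx₃ ↦ hx₁₃ (hG.eq_of_adj_of_dist_lt hvx₁ hvx₃ hx₁ hx₃)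
      linarith [hle' z w]
    · have := hfar hvx₁ hux₁.symm huv_ne hx₁
      linarith [hle' z u]
  · by_cases hux : G.Adj u x
    · refine ⟨w, ⟨hvw_ne, hvw_na⟩, ?_, fun hxw ↦ ?_⟩
      · rintro rfl
        rw [dist_eq_one_iff_adj.mpr hux] at huw
        omega
      · have := dist_le_two_of_adj_of_adj hux hxw
        omega
    · refine ⟨u, ⟨huv_ne.symm, fun h ↦ huv_na h.symm⟩, ?_, fun h ↦ hux h.symm⟩
      rintro rfl
      exact huv_na hvx.symm

end Tree

section LowerBound

variable {G : SimpleGraph V}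

lemma isGenPosSet_compPrism_image_inl_union_image_inr_compl {A : Set V}
    (hA : ∀ a ∈ A, ∀ b ∈ A, ¬G.Adj a b) (hAc : ∀ a ∉ A, ∀ b ∉ A, ¬G.Adj a b) :
    isGenPosSet (compPrism G) (Sum.inl '' A ∪ Sum.inr '' Aᶜ) := by
  refine isGenPosSet_of_dist_eq_dist_of_adj compPrism_preconnected
    (fun x _ y _ ↦ compPrism_dist_le_three x y) ?_
  rintro _ (⟨a, ha, rfl⟩ | ⟨a, ha, rfl⟩) _ (⟨b, hb, rfl⟩ | ⟨b, hb, rfl⟩)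
    _ (⟨c, hc, rfl⟩ | ⟨c, hc, rfl⟩) hab hca hcb
  · exact absurd hab (hA a ha b hb)
  · exact absurd hab (hA a ha b hb)
  · exact (hb (by rwa [← hab])).elim
  · exact (hb (by rwa [← hab])).elim
  · exact (ha (by rwa [hab])).elim
  · exact (ha (by rwa [hab])).elim
  · rw [compPrism_dist_inr_inl (by rintro rfl; exact ha hc),
      compPrism_dist_inr_inl (by rintro rfl; exact hb hc)]
  · have hca : a ≠ c := by rintro rfl; exact hca rfl
    have hcb : b ≠ c := by rintro rfl; exact hcb rfl
    rw [dist_eq_one_iff_adj.mpr (by simpa using ⟨hca, hAc a ha c hc⟩),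
      dist_eq_one_iff_adj.mpr (by simpa using ⟨hcb, hAc b hb c hc⟩)]

lemma exists_isGenPosSet_compPrism_ncard_eq_card [Finite V] (hG : G.IsBipartite) :
    ∃ S, isGenPosSet (compPrism G) S ∧ S.ncard = Nat.card V := by
  obtain ⟨c⟩ := hG
  refine ⟨_, isGenPosSet_compPrism_image_inl_union_image_inr_compl (A := {x | c x = 0}) ?_ ?_,
    ?_⟩
  · intro a ha b hb hab
    exact c.valid hab (ha.trans hb.symm)
  · intro a ha b hb hab
    exact c.valid hab ((Fin.eq_one_of_ne_zero _ ha).trans (Fin.eq_one_of_ne_zero _ hb).symm)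
  · rw [ncard_image_inl_union_image_inr, Set.ncard_add_ncard_compl]

lemma IsTree.not_adj_of_mem_neighborSet (hG : G.IsTree) {v a b : V} (ha : a ∈ G.neighborSet v)
    (hb : b ∈ G.neighborSet v) : ¬G.Adj a b := fun hab ↦
  hG.dist_ne_of_adj v hab ((dist_eq_one_iff_adj.mpr ha).trans (dist_eq_one_iff_adj.mpr hb).symm)

/-- Non-neighbours of `v` are at even distance from `v`, and an edge changes that distance
by one. -/
lemma IsTree.not_adj_of_notMem_neighborSet (hG : G.IsTree) {v a b : V}
    (hv : ∀ w, G.dist v w ≤ 2) (ha : a ∉ G.neighborSet v) (hb : b ∉ G.neighborSet v) :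
    ¬G.Adj a b := fun hab ↦ by
  have ha1 : G.dist v a ≠ 1 := fun h ↦ ha (dist_eq_one_iff_adj.mp h)
  have hb1 : G.dist v b ≠ 1 := fun h ↦ hb (dist_eq_one_iff_adj.mp h)
  have := hG.dist_eq_dist_add_one_of_adj v hab
  have := hv a
  have := hv b
  omega

lemma IsTree.isGenPosSet_compPrism_of_isPrismCenter {v : V} (hG : G.IsTree)
    (hv : IsPrismCenter G v) :
    isGenPosSet (compPrism G)
      (Sum.inl '' (G.neighborSet v)ᶜ ∪ Sum.inr '' insert v (G.neighborSet v)) := by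
  set N := G.neighborSet v
  have hfar (c : V) (hc : c ∉ N) (hcv : c ≠ v) : G.dist v c = 2 :=
    hv.dist_eq_two hG.connected ⟨hcv.symm, hc⟩
  have hcn (b : V) (hb : b ∈ N) : (compPrism G).dist (.inr v) (.inr b) = 2 :=
    compPrism_dist_inr_inr_of_adj hb (hv.2 b hb)
  have hdouble : ∀ z ∈ Sum.inl '' Nᶜ ∪ Sum.inr '' insert v N, z ≠ .inl v → z ≠ .inr v →
      (compPrism G).dist (.inl v) z = (compPrism G).dist (.inr v) z := by
    rintro _ (⟨c, hc, rfl⟩ | ⟨c, hc, rfl⟩) hzl hzr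
    · have hcv : c ≠ v := by rintro rfl; exact hzl rfl
      rw [compPrism_dist_inl_inl_of_dist_eq_two (hfar c hc hcv), compPrism_dist_inr_inl hcv.symm]
    · have hcv : c ≠ v := by rintro rfl; exact hzr rfl
      rw [compPrism_dist_inl_inr hcv.symm, hcn c (hc.resolve_left hcv)]
  have hneighbours : ∀ a ∈ N, ∀ b ∈ N, ∀ z ∈ Sum.inl '' Nᶜ ∪ Sum.inr '' insert v N,
      z ≠ .inr a → z ≠ .inr b →
      (compPrism G).dist (.inr a) z = (compPrism G).dist (.inr b) z := by
    intro a ha b hb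
    rintro _ (⟨c, hc, rfl⟩ | ⟨c, rfl | hc, rfl⟩) hca hcb
    · rw [compPrism_dist_inr_inl (by rintro rfl; exact hc ha),
        compPrism_dist_inr_inl (by rintro rfl; exact hc hb)]
    · rw [dist_comm, hcn a ha, dist_comm, hcn b hb]
    · have hca : a ≠ c := by rintro rfl; exact hca rfl
      have hcb : b ≠ c := by rintro rfl; exact hcb rfl
      rw [dist_eq_one_iff_adj.mpr (by simpa using ⟨hca, hG.not_adj_of_mem_neighborSet ha hc⟩),
        dist_eq_one_iff_adj.mpr (by simpa using ⟨hcb, hG.not_adj_of_mem_neighborSet hb hc⟩)]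
  have hmem {a b : V} (ha : a ∈ insert v N) (hb : b ∈ insert v N) (hab : Gᶜ.Adj a b) : a ∈ N := by
    rcases ha with rfl | ha
    · exact (hab.2 (hb.resolve_left hab.1.symm)).elim
    · exact ha
  refine isGenPosSet_of_dist_eq_dist_of_adj compPrism_preconnected
    (fun x _ y _ ↦ compPrism_dist_le_three x y) ?_
  rintro _ (⟨a, ha, rfl⟩ | ⟨a, ha, rfl⟩) _ (⟨b, hb, rfl⟩ | ⟨b, hb, rfl⟩) z hz hab hza hzb
  · exact (hG.not_adj_of_notMem_neighborSet hv.1 ha hb hab).elim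
  · obtain rfl : a = b := hab
    obtain rfl : a = v := hb.resolve_right ha
    exact hdouble z hz hza hzb
  · obtain rfl : a = b := hab
    obtain rfl : a = v := ha.resolve_right hb
    exact (hdouble z hz hzb hza).symm
  · have hab : Gᶜ.Adj a b := hab
    have haN : a ∈ N := hmem ha hb hab
    have hbN : b ∈ N := hmem hb ha hab.symm
    exact hneighbours a haN b hbN z hz hza hzb

lemma IsTree.exists_isGenPosSet_compPrism_ncard_eq_card_add_one [Finite V] {v : V}
    (hG : G.IsTree) (hv : IsPrismCenter G v) :
    ∃ S, isGenPosSet (compPrism G) S ∧ S.ncard = Nat.card V + 1 := by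
  refine ⟨_, hG.isGenPosSet_compPrism_of_isPrismCenter hv, ?_⟩
  rw [ncard_image_inl_union_image_inr, Set.ncard_insert_of_notMem G.notMem_neighborSet_self,
    ← Set.ncard_add_ncard_compl (G.neighborSet v)]
  ring

end LowerBound

end SimpleGraph

/-- For a tree `T` with `n(T) ≥ 2`: `gp(T\bar{T}) = n(T) + 1` when `diam(T) = 4`,
and `gp(T\bar{T}) = n(T)` otherwise. -/
theorem gp_compPrism_tree {V : Type*} [Fintype V] (T : SimpleGraph V)
    (hT : T.IsTree) (hn : 2 ≤ Fintype.card V) :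
    (graphDiam T = 4 → gpNum (compPrism T) = Fintype.card V + 1) ∧
    (graphDiam T ≠ 4 → gpNum (compPrism T) = Fintype.card V) := by
  have : Nontrivial V := Fintype.one_lt_card_iff_nontrivial.mp hn
  rw [← Nat.card_eq_fintype_card]
  refine ⟨fun h4 ↦ ?_, fun h4 ↦ ?_⟩
  · obtain ⟨v, hv⟩ := hT.exists_isPrismCenter_of_graphDiam_eq_four h4
    obtain ⟨S, hS, hcard⟩ := hT.exists_isGenPosSet_compPrism_ncard_eq_card_add_one hv
    exact gpNum_eq_of_forall_ncard_le hS hcard fun _ ↦ ncard_le_card_add_one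
  · obtain ⟨S, hS, hcard⟩ := exists_isGenPosSet_compPrism_ncard_eq_card hT.isBipartite
    refine gpNum_eq_of_forall_ncard_le hS hcard fun S' hS' ↦ ?_
    by_contra! hlt
    obtain ⟨v, hv⟩ := exists_isPrismCenter_of_card_lt_ncard hS' hlt
    exact h4 (hT.graphDiam_eq_four_of_isPrismCenter hv)
end
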